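/- For the game tree of height 2 (k = 1): for every input v ∈ {0,1}⁴, the cost C(v) of Snir's randomized algorithm is stochastically dominated by C(v*) with v* = (0,1,0,1); i.e., P(C(v) ≥ t) ≤ P(C(v*) ≥ t) for every t. -/
import Mathlib


open MeasureTheory

/-- Value of an ∨-node with leaf values `a, b`. -/
def orVal (a b : Bool) : Bool := a || b

/-- Number of leaves read by Snir's algorithm evaluating an ∨-node with leaf values
`a, b`, where the coin `c` decides which leaf is read first. -/
def orCost (a b : Bool) (c : Bool) : ℕ := if (if c then b else a) then 1 else 2

/-- Number of leaves read by Snir's randomized algorithm on the AND-OR tree of height 2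
on input `v`, with root coin `c0` and ∨-node coins `c1, c2`. -/
def snirCost (v : Fin 4 → Bool) (c0 c1 c2 : Bool) : ℕ :=
  if c0 then
    orCost (v 2) (v 3) c2 + if orVal (v 2) (v 3) then orCost (v 0) (v 1) c1 else 0
  else
    orCost (v 0) (v 1) c1 + if orVal (v 0) (v 1) then orCost (v 2) (v 3) c2 else 0

lemma card_le_measure_le (s t : Set (Bool × Bool × Bool)) [DecidablePred (· ∈ s)] [DecidablePred (· ∈ t)]
    (h : s.toFinset.card ≤ t.toFinset.card) :
    (PMF.uniformOfFintype (Bool × Bool × Bool)).toMeasure s ≤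
      (PMF.uniformOfFintype (Bool × Bool × Bool)).toMeasure t := by
  rw [PMF.toMeasure_uniformOfFintype_apply _ ((s.to_countable).measurableSet),
      PMF.toMeasure_uniformOfFintype_apply _ ((t.to_countable).measurableSet)]
  apply ENNReal.div_le_div_right
  rw [Set.toFinset_card, Set.toFinset_card] at h
  exact Nat.cast_le.mpr (by convert h using 2 <;> exact Subsingleton.elim _ _)

/-- For `k = 1`: for every input `v ∈ {0,1}⁴` the cost `C(v)` of Snir's algorithm is
stochastically dominated by `C(v*)` with `v* = (0,1,0,1)`:
`P(C(v) ≥ t) ≤ P(C(v*) ≥ t)` for every `t`. -/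
theorem snir_cost_k1_stochastic_domination (v : Fin 4 → Bool) (t : ℕ) :
    let μ := (PMF.uniformOfFintype (Bool × Bool × Bool)).toMeasure
    let vstar : Fin 4 → Bool := ![false, true, false, true]
    μ {ω | t ≤ snirCost v ω.1 ω.2.1 ω.2.2} ≤
      μ {ω | t ≤ snirCost vstar ω.1 ω.2.1 ω.2.2} := by
  intro μ vstar
  rcases le_or_gt t 4 with ht | ht
  · apply card_le_measure_le
    rcases h0 : v 0 <;> rcases h1 : v 1 <;> rcases h2 : v 2 <;> rcases h3 : v 3 <;>
      interval_cases t <;>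
      simp only [snirCost, orCost, orVal, h0, h1, h2, h3, vstar] <;> decide
  · have : {ω : Bool × Bool × Bool | t ≤ snirCost v ω.1 ω.2.1 ω.2.2} = ∅ := by
      ext ⟨c0, c1, c2⟩
      simp only [Set.mem_setOf_eq, Set.mem_empty_iff_false, iff_false, not_le]
      calc snirCost v c0 c1 c2 ≤ 4 := by
            rcases h0 : v 0 <;> rcases h1 : v 1 <;> rcases h2 : v 2 <;> rcases h3 : v 3 <;>
              simp only [snirCost, orCost, orVal, h0, h1, h2, h3] <;>
              rcases c0 <;> rcases c1 <;> rcases c2 <;> decide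
        _ < t := ht
    simp [μ, this]
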